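/- Let p be a prime and H a finite p-group. Let Y ≤ Z(H) be a central subgroup and U a normal subgroup of H with Y < U and |U : Y| = p. Let φ be a linear character of Y, and let θ and θ' be irreducible complex characters of H whose restrictions to Y equal θ(1)·φ and θ'(1)·φ respectively. If U ≤ Z(θ), then U ≤ Z(θ'); consequently, in that case the restriction of θ' to U equals θ'(1)·ν for some linear character ν of U extending φ. -/

import Mathlib

open scoped ComplexOrder
/-- `χ` is the character of some finite-dimensional complex representation of `G`. -/
def IsChar (G : Type) [Group G] (χ : G → ℂ) : Prop :=
  ∃ V : FDRep ℂ G, V.character = χ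

/-- `χ` is an irreducible complex character of `G`, i.e. the character of some
simple finite-dimensional complex representation of `G`. -/
def IsIrrChar (G : Type) [Group G] (χ : G → ℂ) : Prop :=
  ∃ V : FDRep ℂ G, CategoryTheory.Simple V ∧ V.character = χ

/-- The standard inner product of complex class functions on a finite group. -/
noncomputable def charInner (G : Type) [Group G] [Fintype G] (f h : G → ℂ) : ℂ :=
  (Fintype.card G : ℂ)⁻¹ * ∑ g : G, f g * starRingEnd ℂ (h g)

/-- `η(χ,ψ)`: the number of distinct irreducible characters occurring as
constituents of the product character `χψ`. -/
noncomputable def eta (G : Type) [Group G] [Fintype G] (χ ψ : G → ℂ) : ℕ :=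
  {θ : G → ℂ | IsIrrChar G θ ∧ 0 < charInner G (fun g => χ g * ψ g) θ}.ncard

/-- A character is faithful if its kernel `{g | χ g = χ 1}` is trivial. -/
def IsFaithfulChar (G : Type) [Group G] (χ : G → ℂ) : Prop :=
  ∀ g : G, χ g = χ 1 → g = 1

/-- The center `Z(χ) = {g | |χ(g)| = χ(1)}` of a character. -/
def charCenter (G : Type) [Group G] (χ : G → ℂ) : Set G :=
  {g | ((‖χ g‖ : ℝ) : ℂ) = χ 1}

/-!
The quotient `U/Y` has order `p` and is normal in the `p`-group `H/Y`, hence central, so every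
commutator `[h, u]` with `u ∈ U` lies in `Y`, where both `θ` and `θ'` act by the scalar `φ`.
Since `θ(u) ≠ 0` and `θ(huh⁻¹) = φ([h, u]) θ(u)`, the hypothesis `U ≤ Z(θ)` forces `φ` to be
trivial on these commutators. Hence every `u ∈ U` commutes with all of `H` in the representation
affording `θ'`, so by Schur's lemma it acts by a scalar `ν(u)` of modulus one, and `ν` is the
required linear character of `U`.
-/

open CategoryTheory Subgroup
open scoped commutatorElement

theorem IsPGroup.le_center_of_card_eq_prime {p : ℕ} [Fact p.Prime] {G : Type*} [Group G]
    [Finite G] (hG : IsPGroup p G) {N : Subgroup G} [N.Normal] (hN : Nat.card N = p) :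
    N ≤ center G := by
  obtain ⟨b, hb, hb1⟩ :=
    (hG.of_equiv ConjAct.toConjAct).exists_fixed_point_of_prime_dvd_card_of_fixed_point
      N (hN ▸ dvd_rfl) (a := 1) (fun g => smul_one g)
  have hbc : (b : G) ∈ center G := mem_center_iff.mpr fun g => by
    have := congrArg Subtype.val (hb (ConjAct.toConjAct g))
    rw [ConjAct.Subgroup.val_conj_smul, ConjAct.toConjAct_smul] at this
    exact mul_inv_eq_iff_eq_mul.mp this
  have htop := zpowers_eq_top_of_prime_card hN (Ne.symm hb1)
  intro n hn
  obtain ⟨k, hk⟩ := mem_zpowers_iff.mp (htop ▸ mem_top (⟨n, hn⟩ : N))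
  have hn : ((b ^ k : N) : G) = n := congrArg Subtype.val hk
  rw [← hn, coe_zpow]
  exact zpow_mem hbc k

theorem IsPGroup.commutatorElement_mem_of_relIndex_eq_prime {p : ℕ} [Fact p.Prime] {G : Type*}
    [Group G] [Finite G] (hG : IsPGroup p G) {Y U : Subgroup G} [Y.Normal] (hU : U.Normal)
    (hidx : Y.relIndex U = p) (g : G) {u : G} (hu : u ∈ U) : ⁅g, u⁆ ∈ Y := by
  have : (U.map (QuotientGroup.mk' Y)).Normal := hU.map _ (QuotientGroup.mk'_surjective Y)
  have hcen := (hG.to_quotient Y).le_center_of_card_eq_prime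
    (N := U.map (QuotientGroup.mk' Y)) (by rw [← relIndex_ker, QuotientGroup.ker_mk', hidx])
  have hcomm := mem_center_iff.mp (hcen (mem_map_of_mem _ hu)) (QuotientGroup.mk' Y g)
  rw [← QuotientGroup.eq_one_iff, ← QuotientGroup.mk'_apply, map_commutatorElement,
    commutatorElement_eq_one_iff_mul_comm, hcomm]

theorem MonoidHom.commute_of_map_commutatorElement_eq_one {G M : Type*} [Group G] [Monoid M]
    (f : G →* M) {a b : G} (h : f ⁅a, b⁆ = 1) : Commute (f a) (f b) := by
  have hab : a * b = ⁅a, b⁆ * (b * a) := by rw [commutatorElement_def]; group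
  rw [Commute, SemiconjBy, ← map_mul, hab, map_mul, h, one_mul, map_mul]

namespace FDRep

section

variable {k G : Type*} [Field k] [Group G] (V : FDRep k G)

instance nontrivial_of_simple [Simple V] : Nontrivial V := by
  by_contra h
  rw [not_nontrivial_iff_subsingleton] at h
  exact id_nonzero V (Action.hom_ext _ _ (by ext v; exact Subsingleton.elim _ _))

theorem smul_one_injective [Nontrivial V] :
    Function.Injective fun c : k => c • (1 : Module.End k V) :=
  smul_left_injective k one_ne_zero

theorem character_one_ne_zero [CharZero k] [Simple V] : V.character 1 ≠ 0 := by
  rw [char_one]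
  exact_mod_cast Module.finrank_pos.ne'

theorem character_mul_of_ρ_eq_smul_one {z : G} {c : k} (hz : V.ρ z = c • 1) (g : G) :
    V.character (z * g) = c * V.character g := by
  rw [character, map_mul, hz, smul_mul_assoc, one_mul, map_smul, smul_eq_mul, character]

theorem exists_ρ_eq_smul_one [IsAlgClosed k] [Simple V] {g : G}
    (hg : ∀ h, Commute (V.ρ h) (V.ρ g)) : ∃ c : k, V.ρ g = c • 1 := by
  let f : V ⟶ V := ⟨FGModuleCat.ofHom (V.ρ g), fun h => by
    ext v; exact (LinearMap.congr_fun (hg h) v).symm⟩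
  obtain ⟨c, hc⟩ := endomorphism_simple_eq_smul_id k f
  exact ⟨c, (congrArg (fun m => m.hom.hom.hom) hc).symm⟩

theorem ρ_eq_character_div_smul_one [IsAlgClosed k] [CharZero k] [Simple V] {g : G}
    (hg : ∀ h, Commute (V.ρ h) (V.ρ g)) :
    V.ρ g = (V.character g / V.character 1) • 1 := by
  obtain ⟨c, hc⟩ := V.exists_ρ_eq_smul_one hg
  have hχ : V.character g = c * V.character 1 := by
    simpa using V.character_mul_of_ρ_eq_smul_one hc 1
  rw [hc, hχ, mul_div_cancel_right₀ _ V.character_one_ne_zero]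

theorem ρ_eq_smul_one_of_character_eq [IsAlgClosed k] [CharZero k] [Simple V] {g : G} {c : k}
    (hg : ∀ h, Commute (V.ρ h) (V.ρ g)) (hχ : V.character g = V.character 1 * c) :
    V.ρ g = c • 1 := by
  rw [V.ρ_eq_character_div_smul_one hg, hχ, mul_div_cancel_left₀ _ V.character_one_ne_zero]

noncomputable def centralCharacter [IsAlgClosed k] [CharZero k] [Simple V] (K : Subgroup G)
    (hK : ∀ u ∈ K, ∀ g, Commute (V.ρ g) (V.ρ u)) : K →* k where
  toFun u := V.character u / V.character 1
  map_one' := div_self V.character_one_ne_zero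
  map_mul' a b := V.smul_one_injective <| by
    simp only
    rw [← V.ρ_eq_character_div_smul_one (hK _ (a * b).2), coe_mul, map_mul,
      V.ρ_eq_character_div_smul_one (hK _ a.2), V.ρ_eq_character_div_smul_one (hK _ b.2),
      smul_mul_smul, one_mul]

end

theorem norm_eq_one_of_ρ_eq_smul_one {G : Type*} [Group G] [Finite G] (V : FDRep ℂ G)
    [Nontrivial V] {g : G} {c : ℂ} (hg : V.ρ g = c • 1) : ‖c‖ = 1 := by
  refine Complex.norm_eq_one_of_pow_eq_one (n := Nat.card G) (V.smul_one_injective ?_)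
    Nat.card_pos.ne'
  have hpow : (c • (1 : Module.End ℂ V)) ^ Nat.card G = 1 := by
    rw [← hg, ← map_pow, pow_card_eq_one', map_one]
  rw [smul_pow, one_pow] at hpow
  simpa only [one_smul] using hpow

end FDRep

theorem mem_charCenter_of_forall_commute {G : Type} [Group G] [Finite G] (V : FDRep ℂ G)
    [Simple V] {u : G} (hu : ∀ g, Commute (V.ρ g) (V.ρ u)) : u ∈ charCenter G V.character := by
  have hρ := V.ρ_eq_character_div_smul_one hu
  show ((‖V.character u‖ : ℝ) : ℂ) = V.character 1
  rw [← mul_div_cancel₀ (V.character u) V.character_one_ne_zero, norm_mul,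
    V.norm_eq_one_of_ρ_eq_smul_one hρ, mul_one, FDRep.char_one, Complex.norm_natCast]
  rfl

theorem eq_one_of_ρ_commutatorElement_eq_smul_one {G : Type} [Group G] (V : FDRep ℂ G)
    [Simple V] {g u : G} {c : ℂ} (hc : V.ρ ⁅g, u⁆ = c • 1) (hu : u ∈ charCenter G V.character) :
    c = 1 := by
  have hχu : V.character u ≠ 0 := fun h0 => V.character_one_ne_zero <| by
    rw [← hu, h0, norm_zero, Complex.ofReal_zero]
  have hconj : V.character u = c * V.character u := by
    rw [← V.character_mul_of_ρ_eq_smul_one hc, ← conj_eq_commutatorElement_mul, MulAut.conj_apply,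
      FDRep.char_conj]
  exact (mul_eq_right₀ hχu).mp hconj.symm

/-- Claim 3.4: with Y central in H, U ⊴ H, Y < U of index p, and θ, θ'
irreducible characters of H lying over the linear character φ of Y: if
U ≤ Z(θ) then U ≤ Z(θ'), and then θ' restricted to U is θ'(1)·ν for some linear
character ν of U extending φ. -/
theorem stmt15 {p : ℕ} (hp : p.Prime) (H : Type) [Group H] [Fintype H]
    (hH : IsPGroup p H) (Y U : Subgroup H)
    (hYc : Y ≤ Subgroup.center H) (hU : U.Normal) (hYU : Y < U)
    (hidx : Y.relIndex U = p)
    (φ : ↥Y →* ℂ)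
    (θ θ' : H → ℂ) (hθ : IsIrrChar H θ) (hθ' : IsIrrChar H θ')
    (hres : ∀ y : ↥Y, θ ↑y = θ 1 * φ y)
    (hres' : ∀ y : ↥Y, θ' ↑y = θ' 1 * φ y)
    (hUZ : (U : Set H) ⊆ charCenter H θ) :
    (U : Set H) ⊆ charCenter H θ' ∧
    ∃ ν : ↥U →* ℂ, (∀ (y : H) (hy : y ∈ Y), ν ⟨y, hYU.le hy⟩ = φ ⟨y, hy⟩) ∧
      ∀ u : ↥U, θ' ↑u = θ' 1 * ν u := by
  have : Fact p.Prime := ⟨hp⟩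
  have : Y.Normal := ⟨fun y hy g => by rwa [mem_center_iff.mp (hYc hy) g, mul_inv_cancel_right]⟩
  obtain ⟨V, hV, rfl⟩ := hθ
  obtain ⟨W, hW, rfl⟩ := hθ'
  have hcomm (g : H) {u : H} (hu : u ∈ U) : ⁅g, u⁆ ∈ Y :=
    hH.commutatorElement_mem_of_relIndex_eq_prime hU hidx g hu
  have hρY (X : FDRep ℂ H) [Simple X] (hX : ∀ y : Y, X.character y = X.character 1 * φ y)
      (y : Y) : X.ρ y = φ y • 1 :=
    X.ρ_eq_smul_one_of_character_eq
      (fun g => (show Commute g (y : H) from mem_center_iff.mp (hYc y.2) g).map X.ρ) (hX y)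
  have hφ (g : H) {u : H} (hu : u ∈ U) : φ ⟨⁅g, u⁆, hcomm g hu⟩ = 1 :=
    eq_one_of_ρ_commutatorElement_eq_smul_one V (hρY V hres ⟨_, hcomm g hu⟩) (hUZ hu)
  have hWU : ∀ u ∈ U, ∀ g, Commute (W.ρ g) (W.ρ u) := fun u hu g =>
    W.ρ.commute_of_map_commutatorElement_eq_one <| by
      rw [hρY W hres' ⟨_, hcomm g hu⟩, hφ g hu, one_smul]
  refine ⟨fun u hu => mem_charCenter_of_forall_commute W (hWU u hu), W.centralCharacter U hWU,
    fun y hy => ?_, fun u => ?_⟩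
  · show W.character y / W.character 1 = φ ⟨y, hy⟩
    rw [hres' ⟨y, hy⟩, mul_div_cancel_left₀ _ W.character_one_ne_zero]
  · show W.character u = W.character 1 * (W.character u / W.character 1)
    rw [mul_div_cancel₀ _ W.character_one_ne_zero]
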